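/- arXiv:1905.11106 — 9 statements merged into one kernel-verified Lean document; each statement's English description precedes it below -/
import Mathlib

section
/- If A is involutory and (u, v, σ) is a singular triplet of A (i.e., Av = σu with u, v unit vectors, σ > 0), then (v, u, 1/σ) is also a singular triplet of A. -/
namespace Matrix

variable {m : Type*} [Fintype m] [DecidableEq m]

theorem mulVec_eq_inv_smul_of_mul_self_eq_one {K : Type*} [Field K] {A : Matrix m m K}
    (hA : A * A = 1) {u v : m → K} {c : K} (hc : c ≠ 0) (h : A *ᵥ v = c • u) :
    A *ᵥ u = c⁻¹ • v := by
  have hv : c • A *ᵥ u = v := by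
    rw [← mulVec_smul, ← h, mulVec_mulVec, hA, one_mulVec]
  rw [← hv, inv_smul_smul₀ hc]

theorem conjTranspose_mul_self_eq_one {R : Type*} [Semiring R] [StarRing R] {A : Matrix m m R}
    (hA : A * A = 1) : Aᴴ * Aᴴ = 1 := by
  rw [← conjTranspose_mul, hA, conjTranspose_one]

end Matrix

theorem involutory_singular_triplet_pair_general {n : ℕ} (A : Matrix (Fin n) (Fin n) ℂ)
    (hA : A * A = 1) (u v : Fin n → ℂ) (σ : ℝ) (hσ : 0 < σ)
    (h1 : A.mulVec v = (σ : ℂ) • u) (h2 : A.conjTranspose.mulVec u = (σ : ℂ) • v) :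
    A.mulVec u = ((σ⁻¹ : ℝ) : ℂ) • v ∧ A.conjTranspose.mulVec v = ((σ⁻¹ : ℝ) : ℂ) • u := by
  have hσ₀ : (σ : ℂ) ≠ 0 := Complex.ofReal_ne_zero.mpr hσ.ne'
  rw [Complex.ofReal_inv]
  exact ⟨Matrix.mulVec_eq_inv_smul_of_mul_self_eq_one hA hσ₀ h1,
    Matrix.mulVec_eq_inv_smul_of_mul_self_eq_one (Matrix.conjTranspose_mul_self_eq_one hA) hσ₀ h2⟩

/-- If `A` is involutory and `(u, v, σ)` is a singular triplet of `A`, then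
`(v, u, 1/σ)` is also a singular triplet of `A`. -/
theorem involutory_singular_triplet_pair {n : ℕ} (A : Matrix (Fin n) (Fin n) ℂ)
    (hA : A * A = 1) (u v : Fin n → ℂ) (σ : ℝ) (hσ : 0 < σ)
    (hu : dotProduct (star u) u = 1) (hv : dotProduct (star v) v = 1)
    (h1 : A.mulVec v = (σ : ℂ) • u) (h2 : A.conjTranspose.mulVec u = (σ : ℂ) • v) :
    A.mulVec u = ((σ⁻¹ : ℝ) : ℂ) • v ∧ A.conjTranspose.mulVec v = ((σ⁻¹ : ℝ) : ℂ) • u :=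
  involutory_singular_triplet_pair_general A hA u v σ hσ h1 h2
end

section
/- Any involutory matrix of odd size n has at least one singular value equal to 1. -/
/-- Any involutory matrix of odd size `n` has at least one singular value equal to `1`. -/
theorem involutory_odd_has_singular_value_one {n : ℕ} (hn : Odd n)
    (A U V : Matrix (Fin n) (Fin n) ℂ) (σ : Fin n → ℝ)
    (hA : A * A = 1)
    (hU : U ∈ Matrix.unitaryGroup (Fin n) ℂ) (hV : V ∈ Matrix.unitaryGroup (Fin n) ℂ)
    (hpos : ∀ j, 0 ≤ σ j)
    (hSVD : A = U * Matrix.diagonal (fun j => (σ j : ℂ)) * V.conjTranspose) :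
    ∃ j : Fin n, σ j = 1 := by
  by_contra hcon
  push_neg at hcon
  set D : Matrix (Fin n) (Fin n) ℂ := Matrix.diagonal (fun j => (σ j : ℂ)) with hD
  set B : Matrix (Fin n) (Fin n) ℂ := V.conjTranspose * U with hB
  have hU1 : U.conjTranspose * U = 1 := hU.1
  have hV1 : V.conjTranspose * V = 1 := hV.1
  -- key identity: D * B * D = Bᴴ
  have hkey : D * B * D = B.conjTranspose := by
    have h0 : U * (D * B * D) * V.conjTranspose = 1 := by
      rw [hSVD] at hA
      calc U * (D * B * D) * V.conjTranspose
          = U * D * V.conjTranspose * (U * D * V.conjTranspose) := by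
            simp only [hB, Matrix.mul_assoc]
        _ = 1 := hA
    have e : U.conjTranspose * (U * (D * B * D) * V.conjTranspose) * V = D * B * D := by
      simp only [← Matrix.mul_assoc]
      rw [hU1, Matrix.one_mul, Matrix.mul_assoc (D * B * D), hV1, Matrix.mul_one]
    rw [h0] at e
    rw [← e, Matrix.mul_one, hB, Matrix.conjTranspose_mul,
      Matrix.conjTranspose_conjTranspose]
  have hent : ∀ i j, (σ i : ℂ) * B i j * (σ j : ℂ) = (starRingEnd ℂ) (B j i) := by
    intro i j
    have := congrFun (congrFun hkey i) j
    simpa [hD, Matrix.mul_diagonal, Matrix.diagonal_mul, Matrix.conjTranspose_apply] using this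
  have hnorm : ∀ i j, σ i * σ j * ‖B i j‖ = ‖B j i‖ := by
    intro i j
    have := congrArg (‖·‖) (hent i j)
    simpa [norm_mul, Complex.norm_real, Real.norm_eq_abs, abs_of_nonneg (hpos i), abs_of_nonneg (hpos j),
      Complex.norm_conj, mul_comm, mul_left_comm, mul_assoc] using this
  -- B is unitary, so det B ≠ 0
  have hBu : B ∈ Matrix.unitaryGroup (Fin n) ℂ := mul_mem (Unitary.star_mem hV) hU
  have hdetB : B.det ≠ 0 := by
    intro h
    have h1 : (star B * B).det = (1 : Matrix (Fin n) (Fin n) ℂ).det := by rw [hBu.1]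
    rw [Matrix.det_mul, h, mul_zero, Matrix.det_one] at h1
    exact zero_ne_one h1
  obtain ⟨π, hπ⟩ : ∃ π : Equiv.Perm (Fin n), ∀ i, B (π i) i ≠ 0 := by
    by_contra h
    push_neg at h
    apply hdetB
    rw [Matrix.det_apply]
    refine Finset.sum_eq_zero fun π _ => ?_
    obtain ⟨i, hi⟩ := h π
    have hz : ∏ x, B (π x) x = 0 := Finset.prod_eq_zero (Finset.mem_univ i) hi
    rw [hz, smul_zero]
  have hprod : ∀ i, σ (π i) * σ i = 1 := by
    intro i
    have h1 := hnorm (π i) i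
    have h2 := hnorm i (π i)
    have hx : 0 < ‖B (π i) i‖ := by
      simpa [norm_pos_iff] using hπ i
    have hsq : (σ (π i) * σ i) * (σ (π i) * σ i) = 1 := by
      have h3 : (σ (π i) * σ i) * ((σ (π i) * σ i) * ‖B (π i) i‖)
          = ‖B (π i) i‖ := by
        rw [h1]
        calc (σ (π i) * σ i) * ‖B i (π i)‖
            = σ i * σ (π i) * ‖B i (π i)‖ := by ring
          _ = ‖B (π i) i‖ := h2
      have := hx.ne'
      field_simp at h3
      nlinarith [h3, hx]
    rcases mul_self_eq_one_iff.mp hsq with h | h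
    · exact h
    · exfalso
      nlinarith [hpos i, hpos (π i)]
  have hσpos : ∀ i, 0 < σ i := by
    intro i
    rcases (hpos i).lt_or_eq with h | h
    · exact h
    · exfalso
      have := hprod i
      rw [← h, mul_zero] at this
      exact zero_ne_one this
  set S : Finset (Fin n) := Finset.univ.filter (fun i => 1 < σ i) with hS
  have hmap : ∀ i, i ∈ S ↔ π i ∉ S := by
    intro i
    simp only [hS, Finset.mem_filter, Finset.mem_univ, true_and, not_lt]
    constructor
    · intro h
      nlinarith [hprod i, hσpos i, hσpos (π i)]
    · intro h
      have hlt : σ (π i) < 1 := lt_of_le_of_ne h (hcon (π i))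
      nlinarith [hprod i, hσpos i, hσpos (π i)]
  have hsub1 : S.image π ⊆ Sᶜ := by
    intro j hj
    obtain ⟨i, hi, rfl⟩ := Finset.mem_image.mp hj
    simpa [Finset.mem_compl] using (hmap i).mp hi
  have hsub2 : Sᶜ.image π ⊆ S := by
    intro j hj
    obtain ⟨i, hi, rfl⟩ := Finset.mem_image.mp hj
    by_contra hc
    exact (Finset.mem_compl.mp hi) ((hmap i).mpr hc)
  have hc1 : S.card ≤ Sᶜ.card := by
    calc S.card = (S.image π).card := (Finset.card_image_of_injective S π.injective).symm
      _ ≤ Sᶜ.card := Finset.card_le_card hsub1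
  have hc2 : Sᶜ.card ≤ S.card := by
    calc Sᶜ.card = (Sᶜ.image π).card := (Finset.card_image_of_injective Sᶜ π.injective).symm
      _ ≤ S.card := Finset.card_le_card hsub2
  have heq : S.card = Sᶜ.card := le_antisymm hc1 hc2
  have htot : S.card + Sᶜ.card = n := by
    simp [Finset.card_add_card_compl S]
  rw [Nat.odd_iff] at hn
  omega
end

section
/- If A is involutory with r ≤ n/2 eigenvalues equal to -1, then A has at least n - 2r singular values equal to 1. -/
open Matrix Module

/-- Rank of a sum of matrices is at most sum of ranks. -/
lemma matrix_rank_add_le {n : ℕ} (M N : Matrix (Fin n) (Fin n) ℂ) :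
    (M + N).rank ≤ M.rank + N.rank := by
  have hle : LinearMap.range (M + N).mulVecLin ≤
      LinearMap.range M.mulVecLin ⊔ LinearMap.range N.mulVecLin := by
    rintro x ⟨y, rfl⟩
    rw [Matrix.mulVecLin_add]
    exact Submodule.add_mem_sup (LinearMap.mem_range_self _ y) (LinearMap.mem_range_self _ y)
  unfold Matrix.rank
  exact le_trans (Submodule.finrank_mono hle)
    (Submodule.finrank_add_le_finrank_add_finrank _ _)

/-- If `M * N = 0` then the ranks add up to at most `n`. -/
lemma matrix_rank_le_of_mul_eq_zero {n : ℕ} (M N : Matrix (Fin n) (Fin n) ℂ)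
    (h : M * N = 0) : M.rank + N.rank ≤ n := by
  have hle : LinearMap.range N.mulVecLin ≤ LinearMap.ker M.mulVecLin := by
    rintro x ⟨y, rfl⟩
    have h0 : (M * N).mulVecLin y = 0 := by rw [h]; simp
    rw [Matrix.mulVecLin_mul, LinearMap.comp_apply] at h0
    exact h0
  have h1 : finrank ℂ (LinearMap.range N.mulVecLin)
      ≤ finrank ℂ (LinearMap.ker M.mulVecLin) := Submodule.finrank_mono hle
  have h2 := LinearMap.finrank_range_add_finrank_ker M.mulVecLin
  have h3 : finrank ℂ (Fin n → ℂ) = n := by simp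
  unfold Matrix.rank
  omega

/-- If `A` is involutory with `r ≤ n/2` eigenvalues equal to `-1`, then `A` has at
least `n - 2r` singular values equal to `1` (counted with multiplicity, read off
from any SVD of `A`). -/
theorem involutory_min_number_of_unit_singular_values {n r : ℕ}
    (A U V : Matrix (Fin n) (Fin n) ℂ) (σ : Fin n → ℝ)
    (hA : A * A = 1)
    (hr : Module.finrank ℂ (Module.End.eigenspace (Matrix.mulVecLin A) (-1)) = r)
    (hr2 : 2 * r ≤ n)
    (hU : U ∈ Matrix.unitaryGroup (Fin n) ℂ) (hV : V ∈ Matrix.unitaryGroup (Fin n) ℂ)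
    (hpos : ∀ j, 0 ≤ σ j)
    (hSVD : A = U * Matrix.diagonal (fun j => (σ j : ℂ)) * V.conjTranspose) :
    n - 2 * r ≤ (Finset.univ.filter (fun j : Fin n => σ j = 1)).card := by
  -- `r` is the nullity of `A + 1`
  have hker : Module.End.eigenspace (Matrix.mulVecLin A) (-1)
      = LinearMap.ker (A + 1).mulVecLin := by
    rw [Module.End.eigenspace_def]
    congr 1
    rw [Matrix.mulVecLin_add, Matrix.mulVecLin_one]
    ext x i <;> simp [neg_smul]
  -- rank of A + 1 is n - r
  have hrank1 : (A + 1).rank + r = n := by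
    rw [hker] at hr
    have h2 := LinearMap.finrank_range_add_finrank_ker (A + 1).mulVecLin
    have h3 : finrank ℂ (Fin n → ℂ) = n := by simp
    unfold Matrix.rank
    omega
  -- rank of A - 1 is at most r
  have hmul0 : (A - 1) * (A + 1) = 0 := by
    have h : (A - 1) * (A + 1) = A * A - 1 := by noncomm_ring
    rw [h, hA, sub_self]
  have hrankm : (A - 1).rank ≤ r := by
    have := matrix_rank_le_of_mul_eq_zero _ _ hmul0
    omega
  -- rank of Aᴴ - A is at most 2r
  have hskew : Aᴴ - A = (A - 1)ᴴ + (1 - A) := by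
    rw [Matrix.conjTranspose_sub, Matrix.conjTranspose_one]
    abel
  have hmul0' : (1 - A) * (A + 1) = 0 := by
    have h : (1 - A) * (A + 1) = 1 - A * A := by noncomm_ring
    rw [h, hA, sub_self]
  have hrank1A : (1 - A).rank ≤ r := by
    have := matrix_rank_le_of_mul_eq_zero _ _ hmul0'
    omega
  have hct : (A - 1)ᴴ.rank = (A - 1).rank := by
    open scoped ComplexOrder in
    exact Matrix.rank_conjTranspose _
  have hskewrank : (Aᴴ - A).rank ≤ 2 * r := by
    calc (Aᴴ - A).rank = ((A - 1)ᴴ + (1 - A)).rank := by rw [hskew]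
      _ ≤ (A - 1)ᴴ.rank + (1 - A).rank := matrix_rank_add_le _ _
      _ = (A - 1).rank + (1 - A).rank := by rw [hct]
      _ ≤ r + r := add_le_add hrankm hrank1A
      _ = 2 * r := by ring
  -- A * Aᴴ - 1 = A * (Aᴴ - A), so its rank is at most 2r
  have hBrank : (A * Aᴴ - 1).rank ≤ 2 * r := by
    have hfac : A * Aᴴ - 1 = A * (Aᴴ - A) := by
      rw [Matrix.mul_sub, hA]
    rw [hfac]
    exact le_trans (Matrix.rank_mul_le_right _ _) hskewrank
  -- From the SVD, A * Aᴴ - 1 = U * diagonal (σ² - 1) * Uᴴ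
  set D : Matrix (Fin n) (Fin n) ℂ := Matrix.diagonal (fun j => (σ j : ℂ)) with hD
  have hDH : Dᴴ = D := by
    have hstar : (star fun j => ((σ j : ℂ))) = fun j => ((σ j : ℂ)) := by
      funext j
      simp [Complex.conj_ofReal]
    rw [hD, Matrix.diagonal_conjTranspose, hstar]
  have hVV : Vᴴ * V = 1 := (Matrix.mem_unitaryGroup_iff'.mp hV)
  have hUU : U * Uᴴ = 1 := (Matrix.mem_unitaryGroup_iff.mp hU)
  have hUU' : Uᴴ * U = 1 := (Matrix.mem_unitaryGroup_iff'.mp hU)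
  have hB : A * Aᴴ - 1 = U * (Matrix.diagonal (fun j => (σ j : ℂ) ^ 2 - 1)) * Uᴴ := by
    have h1 : A * Aᴴ = U * (D * D) * Uᴴ := by
      rw [hSVD]
      simp only [Matrix.conjTranspose_mul, Matrix.conjTranspose_conjTranspose, hDH,
        Matrix.mul_assoc]
      rw [← Matrix.mul_assoc Vᴴ V, hVV, Matrix.one_mul]
    have hdd : D * D = Matrix.diagonal (fun j => (σ j : ℂ) ^ 2) := by
      rw [hD, Matrix.diagonal_mul_diagonal]
      congr 1; funext j; ring
    have hdiag : Matrix.diagonal (fun j => (σ j : ℂ) ^ 2 - 1)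
        = Matrix.diagonal (fun j => (σ j : ℂ) ^ 2) - 1 := by
      rw [← Matrix.diagonal_one, Matrix.diagonal_sub]
    rw [h1, hdd, hdiag, Matrix.mul_sub, Matrix.sub_mul, Matrix.mul_one, hUU]
  -- the rank of that is the number of j with σ j ≠ 1
  have hUdet : IsUnit U.det := by
    have := congrArg Matrix.det hUU
    rw [Matrix.det_mul, Matrix.det_one] at this
    exact IsUnit.of_mul_eq_one _ this
  have hUHdet : IsUnit Uᴴ.det := by
    have := congrArg Matrix.det hUU'
    rw [Matrix.det_mul, Matrix.det_one] at this
    exact IsUnit.of_mul_eq_one _ this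
  have hrankB : (A * Aᴴ - 1).rank
      = (Matrix.diagonal (fun j => (σ j : ℂ) ^ 2 - 1)).rank := by
    rw [hB, Matrix.rank_mul_eq_left_of_isUnit_det _ _ hUHdet,
      Matrix.rank_mul_eq_right_of_isUnit_det _ _ hUdet]
  have hcard : (Matrix.diagonal (fun j => (σ j : ℂ) ^ 2 - 1)).rank
      = (Finset.univ.filter (fun j : Fin n => ¬ σ j = 1)).card := by
    rw [Matrix.rank_diagonal, Fintype.card_subtype]
    congr 1
    apply Finset.filter_congr
    intro j _
    constructor
    · intro h h1
      apply h
      rw [h1]; norm_num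
    · intro h h0
      apply h
      have h1 : (σ j : ℂ) ^ 2 = 1 := by
        have := sub_eq_zero.mp h0
        linear_combination this
      have h2 : (σ j) ^ 2 = 1 := by exact_mod_cast h1
      have := hpos j
      nlinarith
  have hsplit := Finset.card_filter_add_card_filter_not
    (s := (Finset.univ : Finset (Fin n))) (p := fun j : Fin n => σ j = 1)
  simp only [Finset.card_univ, Fintype.card_fin] at hsplit
  rw [hrankB, hcard] at hBrank
  omega
end

section
/- If A ∈ ℂ^{n×n} is involutory with singular value pairs (σⱼ, 1/σⱼ) (including pairs (1,1)), then B = (1/2)(I + A) has corresponding singular value pairs ((σⱼ + 1/σⱼ)/2, 0), and the remaining singular values of B are 1 or 0. -/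
open Matrix in
theorem core_svd {n : ℕ} (σ : Fin n → ℝ) (hpos : ∀ j, 0 < σ j)
    (W : Matrix (Fin n) (Fin n) ℂ)
    (hW1 : Wᴴ * W = 1)
    (hWh : Wᴴ = W)
    (hsupp : ∀ i j, W i j ≠ 0 → σ i * σ j = 1) :
    ∃ (P : Matrix (Fin n) (Fin n) ℂ) (τ : Fin n → ℝ),
      Pᴴ * P = 1 ∧ (∀ j, 0 ≤ τ j) ∧
      (2⁻¹ : ℂ) • (Matrix.diagonal (fun j => (σ j : ℂ)) + W) =
        P * Matrix.diagonal (fun j => (τ j : ℂ)) * Pᴴ ∧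
      ∀ j, (1 < σ j → τ j = (σ j + (σ j)⁻¹) / 2) ∧ (σ j < 1 → τ j = 0) ∧
        (σ j = 1 → τ j = 0 ∨ τ j = 1) := by
  classical
  have hherm : ∀ i j, star (W j i) = W i j := by
    intro i j
    have := congrFun (congrFun hWh i) j
    simpa [Matrix.conjTranspose_apply] using this
  have hW2 : W * W = 1 := by
    calc W * W = Wᴴ * W := by rw [hWh]
    _ = 1 := hW1
  have hWW : ∀ i j, (∑ k, star (W k i) * W k j) = (if i = j then (1:ℂ) else 0) := by
    intro i j
    have := congrFun (congrFun hW1 i) j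
    simpa [Matrix.mul_apply, Matrix.conjTranspose_apply, Matrix.one_apply] using this
  have hW2e : ∀ i j, (∑ k, W i k * W k j) = (if i = j then (1:ℂ) else 0) := by
    intro i j
    have := congrFun (congrFun hW2 i) j
    simpa [Matrix.mul_apply, Matrix.one_apply] using this
  have hdiag0 : ∀ j, σ j ≠ 1 → W j j = 0 := by
    intro j hj
    by_contra h
    rcases mul_self_eq_one_iff.mp (hsupp j j h) with h1 | h1
    · exact hj h1
    · have := hpos j; linarith
  set p : Fin n → Prop := fun j => σ j = 1 with hp
  have hsum : ∀ (f : Fin n → ℂ), (∀ k, ¬ p k → f k = 0) →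
      ∑ k, f k = ∑ k : Subtype p, f k.1 := by
    intro f hf
    rw [← Finset.sum_filter_add_sum_filter_not Finset.univ p f]
    have h2 : ∑ k ∈ Finset.univ.filter (fun k => ¬ p k), f k = 0 :=
      Finset.sum_eq_zero (fun k hk => hf k (Finset.mem_filter.mp hk).2)
    rw [h2, add_zero]
    exact Finset.sum_subtype _ (fun x => Finset.mem_filter.trans (and_iff_right (Finset.mem_univ x))) f
  set D : Matrix (Fin n) (Fin n) ℂ := Matrix.diagonal (fun j => (σ j : ℂ)) with hD
  set N : Matrix (Fin n) (Fin n) ℂ := (2⁻¹ : ℂ) • (D + W) with hN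
  have hNe : ∀ i j, N i j = 2⁻¹ * ((if i = j then (σ i : ℂ) else 0) + W i j) := by
    intro i j
    simp [hN, hD, Matrix.diagonal_apply, mul_add]
  have hNv1 : ∀ i j, p i → ¬ p j → N i j = 0 := by
    intro i j hi hj
    have hij : i ≠ j := fun h => hj (h ▸ hi)
    have hW0 : W i j = 0 := by
      by_contra h
      have := hsupp i j h
      rw [hp] at hi
      rw [hi, one_mul] at this
      exact hj this
    rw [hNe, hW0, if_neg hij]
    ring
  have hNv2 : ∀ i j, ¬ p i → p j → N i j = 0 := by
    intro i j hi hj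
    have hij : i ≠ j := fun h => hi (h ▸ hj)
    have hW0 : W i j = 0 := by
      by_contra h
      have := hsupp i j h
      rw [hp] at hj
      rw [hj, mul_one] at this
      exact hi this
    rw [hNe, hW0, if_neg hij]
    ring
  have hNherm : ∀ i j, star (N j i) = N i j := by
    intro i j
    rw [hNe, hNe]
    by_cases h : i = j
    · subst h
      simp [hherm]
    · rw [if_neg h, if_neg (Ne.symm h)]
      simp [hherm]
  set N₁ : Matrix (Subtype p) (Subtype p) ℂ := Matrix.of (fun i j => N i.1 j.1) with hN₁
  have hN₁h : N₁.IsHermitian := by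
    apply Matrix.ext
    intro i j
    simp only [Matrix.conjTranspose_apply, hN₁, Matrix.of_apply]
    exact hNherm i.1 j.1
  set P₁ : Matrix (Subtype p) (Subtype p) ℂ := (hN₁h.eigenvectorUnitary : Matrix (Subtype p) (Subtype p) ℂ) with hP₁def
  set ρ : Subtype p → ℝ := hN₁h.eigenvalues with hρdef
  have hsp : N₁ = P₁ * Matrix.diagonal (fun k => ((ρ k : ℝ) : ℂ)) * star P₁ := hN₁h.spectral_theorem
  have hP₁u1 : star P₁ * P₁ = 1 := hN₁h.eigenvectorUnitary.2.1
  have hP₁u2 : P₁ * star P₁ = 1 := hN₁h.eigenvectorUnitary.2.2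
  have hNP₁ : N₁ * P₁ = P₁ * Matrix.diagonal (fun k => ((ρ k : ℝ) : ℂ)) := by
    rw [hsp, Matrix.mul_assoc, Matrix.mul_assoc, hP₁u1, Matrix.mul_one]
  have hidem : N₁ * N₁ = N₁ := by
    apply Matrix.ext
    intro i j
    have hvan : ∀ k, ¬ p k → N i.1 k * N k j.1 = 0 := by
      intro k hk
      rw [hNv1 i.1 k i.2 hk, zero_mul]
    have hms : (N₁ * N₁) i j = ∑ k, N i.1 k * N k j.1 := by
      rw [Matrix.mul_apply, hsum _ hvan]
      rfl
    rw [hms]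
    have hi0 : σ i.1 = 1 := i.2
    have hj0 : σ j.1 = 1 := j.2
    have hi1 : (σ i.1 : ℂ) = 1 := by rw [hi0]; norm_num
    have hj1 : (σ j.1 : ℂ) = 1 := by rw [hj0]; norm_num
    have hterm : ∀ k, N i.1 k * N k j.1 =
        4⁻¹ * ((if i.1 = k then (1:ℂ) else 0) * (if k = j.1 then (1:ℂ) else 0)
          + (if i.1 = k then (1:ℂ) else 0) * W k j.1
          + W i.1 k * (if k = j.1 then (1:ℂ) else 0)
          + W i.1 k * W k j.1) := by
      intro k
      rw [hNe, hNe]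
      by_cases h1 : i.1 = k
      · subst h1
        by_cases h2 : i.1 = j.1
        · rw [if_pos rfl, if_pos h2, if_pos rfl, if_pos h2, hi1]; ring
        · rw [if_pos rfl, if_neg h2, if_pos rfl, if_neg h2, hi1]; ring
      · by_cases h2 : k = j.1
        · subst h2
          rw [if_neg h1, if_pos rfl, if_neg h1, if_pos rfl, hj1]; ring
        · rw [if_neg h1, if_neg h2, if_neg h1, if_neg h2]; ring
    rw [Finset.sum_congr rfl (fun k _ => hterm k), ← Finset.mul_sum]
    rw [Finset.sum_add_distrib, Finset.sum_add_distrib, Finset.sum_add_distrib]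
    have s1 : ∑ k, (if i.1 = k then (1:ℂ) else 0) * (if k = j.1 then (1:ℂ) else 0)
        = if i.1 = j.1 then (1:ℂ) else 0 := by
      simp [ite_mul]
    have s2 : ∑ k, (if i.1 = k then (1:ℂ) else 0) * W k j.1 = W i.1 j.1 := by
      simp [ite_mul]
    have s3 : ∑ k, W i.1 k * (if k = j.1 then (1:ℂ) else 0) = W i.1 j.1 := by
      simp [mul_ite]
    rw [s1, s2, s3, hW2e i.1 j.1]
    show _ = N i.1 j.1
    rw [hNe, hi1]
    by_cases h : i.1 = j.1 <;> simp [h] <;> ring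
  have hρ01 : ∀ k, ρ k = 0 ∨ ρ k = 1 := by
    have hdiag : star P₁ * N₁ * P₁ = Matrix.diagonal (fun k => ((ρ k : ℝ) : ℂ)) := by
      calc star P₁ * N₁ * P₁ = star P₁ * (N₁ * P₁) := by rw [mul_assoc]
        _ = star P₁ * (P₁ * Matrix.diagonal (fun k => ((ρ k : ℝ) : ℂ))) := by rw [hNP₁]
        _ = (star P₁ * P₁) * Matrix.diagonal (fun k => ((ρ k : ℝ) : ℂ)) := by rw [mul_assoc]
        _ = Matrix.diagonal (fun k => ((ρ k : ℝ) : ℂ)) := by rw [hP₁u1, one_mul]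
    have hdd : Matrix.diagonal (fun k => ((ρ k : ℝ) : ℂ)) * Matrix.diagonal (fun k => ((ρ k : ℝ) : ℂ))
        = Matrix.diagonal (fun k => ((ρ k : ℝ) : ℂ)) := by
      rw [← hdiag]
      calc (star P₁ * N₁ * P₁) * (star P₁ * N₁ * P₁)
          = star P₁ * (N₁ * (P₁ * star P₁) * N₁) * P₁ := by
            simp only [mul_assoc]
        _ = star P₁ * (N₁ * N₁) * P₁ := by rw [hP₁u2, mul_one]
        _ = star P₁ * N₁ * P₁ := by rw [hidem, mul_assoc]
    intro k
    have := congrFun (congrFun hdd k) k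
    simp only [Matrix.diagonal_mul_diagonal, Matrix.diagonal_apply_eq, Function.comp_apply] at this
    have hreal : ρ k * ρ k = ρ k := by
      have h2 : ((ρ k * ρ k : ℝ) : ℂ) = ((ρ k : ℝ) : ℂ) := by push_cast; exact_mod_cast this
      exact_mod_cast h2
    rcases mul_eq_zero.mp (by linarith [hreal] : ρ k * (ρ k - 1) = 0) with h | h
    · exact Or.inl h
    · exact Or.inr (by linarith)
  -- scalar data
  set a : Fin n → ℝ := fun j => if 1 < σ j then σ j else -(σ j)⁻¹ with ha
  set c : Fin n → ℝ := fun j => Real.sqrt (a j ^ 2 + 1) with hc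
  have hcpos : ∀ j, 0 < c j := fun j => Real.sqrt_pos.mpr (by nlinarith [sq_nonneg (a j)])
  have hc2 : ∀ j, c j ^ 2 = a j ^ 2 + 1 := fun j => Real.sq_sqrt (by nlinarith [sq_nonneg (a j)])
  have hcne : ∀ j, ((c j : ℝ) : ℂ) ≠ 0 := fun j => by
    simpa using (hcpos j).ne'
  set τ : Fin n → ℝ := fun j => if h : p j then ρ ⟨j, h⟩ else (a j + (σ j)⁻¹) / 2 with hτ
  set P : Matrix (Fin n) (Fin n) ℂ := Matrix.of (fun k j =>
    if hj : p j then (if hk : p k then P₁ ⟨k, hk⟩ ⟨j, hj⟩ else 0)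
    else ((a j : ℂ) * (if k = j then 1 else 0) + W k j) * ((c j : ℝ) : ℂ)⁻¹) with hP
  have hinv : ∀ k j, W k j ≠ 0 → σ k = (σ j)⁻¹ := by
    intro k j h
    have h1 := hsupp k j h
    have h2 : σ j ≠ 0 := (hpos j).ne'
    field_simp
    linarith [h1]
  have hτgt : ∀ j, 1 < σ j → τ j = (σ j + (σ j)⁻¹) / 2 := by
    intro j h
    have hj : ¬ p j := by rw [hp]; intro hh; have hh' : σ j = 1 := hh; linarith
    rw [hτ]
    simp only [dif_neg hj, ha]
    rw [if_pos h]
  have hτlt : ∀ j, σ j < 1 → τ j = 0 := by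
    intro j h
    have hj : ¬ p j := by rw [hp]; intro hh; have hh' : σ j = 1 := hh; linarith
    rw [hτ]
    simp only [dif_neg hj, ha]
    rw [if_neg (by linarith)]
    ring
  have hτeq : ∀ j (h : p j), τ j = ρ ⟨j, h⟩ := by
    intro j h
    rw [hτ]
    simp only [dif_pos h]
  have hτnn : ∀ j, 0 ≤ τ j := by
    intro j
    rcases lt_trichotomy (σ j) 1 with h | h | h
    · rw [hτlt j h]
    · have hpj : p j := h
      rw [hτeq j hpj]
      rcases hρ01 ⟨j, hpj⟩ with h2 | h2 <;> rw [h2] <;> norm_num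
    · rw [hτgt j h]
      have := hpos j
      have : 0 < (σ j)⁻¹ := by positivity
      linarith
  have hasum : ∀ k j, W k j ≠ 0 → ¬ p k → ¬ p j → a k + a j = 0 := by
    intro k j hw hk hj
    have hkinv := hinv k j hw
    have hpk : σ k ≠ 1 := hk
    have hpj : σ j ≠ 1 := hj
    rcases lt_trichotomy (σ j) 1 with h | h | h
    · have h1 : 1 < σ k := by
        rw [hkinv]
        exact (one_lt_inv₀ (hpos j)).mpr h
      rw [ha]
      simp only
      rw [if_pos h1, if_neg (by linarith : ¬ 1 < σ j), hkinv]
      ring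
    · exact absurd h hpj
    · have h1 : σ k < 1 := by
        rw [hkinv]
        exact inv_lt_one_of_one_lt₀ h
      rw [ha]
      simp only
      rw [if_neg (by linarith : ¬ 1 < σ k), if_pos h, hkinv, inv_inv]
      ring
  have hkk : ∀ j, ¬ p j → a j * σ j + 1 = 2 * τ j * a j := by
    intro j hj
    have hσ : σ j ≠ 0 := (hpos j).ne'
    rw [hτ]
    simp only [dif_neg hj]
    rw [ha]
    simp only
    by_cases h : 1 < σ j
    · rw [if_pos h]
      field_simp
    · rw [if_neg h]
      field_simp
      ring
  have hWτ : ∀ k j, W k j ≠ 0 → ¬ p j → a j + σ k = 2 * τ j := by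
    intro k j hw hj
    have hkinv := hinv k j hw
    rw [hτ]
    simp only [dif_neg hj]
    rw [hkinv]
    ring
  have hPP : Pᴴ * P = 1 := by
    apply Matrix.ext
    intro i j
    rw [Matrix.mul_apply]
    simp only [Matrix.conjTranspose_apply, Matrix.one_apply]
    by_cases hi : p i <;> by_cases hj : p j
    · -- both in the σ = 1 block
      have hvan : ∀ k, ¬ p k → star (P k i) * P k j = 0 := by
        intro k hk
        rw [hP]
        simp only [Matrix.of_apply, dif_pos hi, dif_neg hk, star_zero, zero_mul]
      rw [hsum _ hvan]
      have hre : ∀ k : Subtype p, star (P k.1 i) * P k.1 j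
          = star (P₁ k ⟨i, hi⟩) * P₁ k ⟨j, hj⟩ := by
        intro k
        rw [hP]
        simp only [Matrix.of_apply, dif_pos hi, dif_pos hj, dif_pos k.2]
      rw [Finset.sum_congr rfl (fun k _ => hre k)]
      have hone := congrFun (congrFun hP₁u1 ⟨i, hi⟩) ⟨j, hj⟩
      rw [Matrix.mul_apply] at hone
      simp only [Matrix.star_apply, Matrix.one_apply] at hone
      rw [hone]
      by_cases h : i = j
      · subst h; simp
      · rw [if_neg h, if_neg (by simp [Subtype.mk_eq_mk, h])]
    · -- i in block, j not
      have hij : i ≠ j := fun h => hj (h ▸ hi)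
      rw [if_neg hij]
      apply Finset.sum_eq_zero
      intro k _
      by_cases hk : p k
      · have hkj : k ≠ j := fun h => hj (h ▸ hk)
        have hw : W k j = 0 := by
          by_contra hw
          have h1 := hsupp k j hw
          have h2 : σ k = 1 := hk
          rw [h2, one_mul] at h1
          exact hj h1
        rw [hP]
        simp only [Matrix.of_apply, dif_neg hj, hw, if_neg hkj]
        ring
      · rw [hP]
        simp only [Matrix.of_apply, dif_pos hi, dif_neg hk, star_zero, zero_mul]
    · -- j in block, i not
      have hij : i ≠ j := fun h => hi (h ▸ hj)
      rw [if_neg hij]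
      apply Finset.sum_eq_zero
      intro k _
      by_cases hk : p k
      · have hki : k ≠ i := fun h => hi (h ▸ hk)
        have hw : W k i = 0 := by
          by_contra hw
          have h1 := hsupp k i hw
          have h2 : σ k = 1 := hk
          rw [h2, one_mul] at h1
          exact hi h1
        rw [hP]
        simp only [Matrix.of_apply, dif_neg hi, hw, if_neg hki]
        simp
      · rw [hP]
        simp only [Matrix.of_apply, dif_pos hj, dif_neg hk, mul_zero]
    · -- both outside the block
      have hstar : ∀ k, star (P k i)
          = ((a i : ℂ) * (if k = i then 1 else 0) + star (W k i)) * ((c i : ℝ) : ℂ)⁻¹ := by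
        intro k
        rw [hP]
        simp only [Matrix.of_apply, dif_neg hi]
        simp only [star_mul', star_add, star_inv₀, Complex.star_def, Complex.conj_ofReal,
          apply_ite (star : ℂ → ℂ), star_one, star_zero]
      have hterm : ∀ k, star (P k i) * P k j = (((c i : ℝ) : ℂ)⁻¹ * ((c j : ℝ) : ℂ)⁻¹) *
          ( (a i : ℂ) * (a j : ℂ) * ((if k = i then (1:ℂ) else 0) * (if k = j then 1 else 0))
          + (a i : ℂ) * ((if k = i then (1:ℂ) else 0) * W k j)
          + (a j : ℂ) * (star (W k i) * (if k = j then (1:ℂ) else 0))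
          + star (W k i) * W k j ) := by
        intro k
        rw [hstar k, hP]
        simp only [Matrix.of_apply, dif_neg hj]
        ring
      rw [Finset.sum_congr rfl (fun k _ => hterm k), ← Finset.mul_sum]
      rw [Finset.sum_add_distrib, Finset.sum_add_distrib, Finset.sum_add_distrib,
        ← Finset.mul_sum, ← Finset.mul_sum, ← Finset.mul_sum]
      have s1 : ∑ k, (if k = i then (1:ℂ) else 0) * (if k = j then 1 else 0)
          = if i = j then 1 else 0 := by
        by_cases h : i = j
        · subst h; simp
        · rw [if_neg h]
          apply Finset.sum_eq_zero
          intro k _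
          by_cases h1 : k = i
          · subst h1
            rw [if_neg (fun hh => h hh)]
            ring
          · rw [if_neg h1]
            ring
      have s2 : ∑ k, (if k = i then (1:ℂ) else 0) * W k j = W i j := by simp
      have s3 : ∑ k, star (W k i) * (if k = j then (1:ℂ) else 0) = star (W j i) := by simp
      rw [s1, s2, s3, hWW i j, hherm i j]
      by_cases h : i = j
      · subst h
        simp only [if_pos rfl]
        rw [hdiag0 i hi]
        have hcc : (a i : ℂ) * (a i : ℂ) + 1 = ((c i : ℝ) : ℂ) * ((c i : ℝ) : ℂ) := by
          have h2 : c i * c i = a i * a i + 1 := by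
            have := hc2 i
            nlinarith [this]
          calc (a i : ℂ) * (a i : ℂ) + 1 = ((a i * a i + 1 : ℝ) : ℂ) := by push_cast; ring
            _ = ((c i * c i : ℝ) : ℂ) := by rw [h2]
            _ = ((c i : ℝ) : ℂ) * ((c i : ℝ) : ℂ) := by push_cast; ring
        have hne := hcne i
        field_simp
        simp only [if_pos trivial]
        linear_combination hcc
      · simp only [if_neg h]
        by_cases hw : W i j = 0
        · rw [hw]
          ring
        · have h2 : (a i : ℂ) + (a j : ℂ) = 0 := by
            exact_mod_cast congrArg (fun x : ℝ => (x : ℂ)) (hasum i j hw hi hj)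
          linear_combination (((c i : ℝ) : ℂ)⁻¹ * ((c j : ℝ) : ℂ)⁻¹ * W i j) * h2
  have hNPeq : N * P = P * Matrix.diagonal (fun j => (τ j : ℂ)) := by
    apply Matrix.ext
    intro k j
    rw [Matrix.mul_apply, Matrix.mul_diagonal]
    by_cases hj : p j
    · by_cases hk : p k
      · have hvan : ∀ l, ¬ p l → N k l * P l j = 0 := by
          intro l hl
          rw [hP]
          simp only [Matrix.of_apply, dif_pos hj, dif_neg hl, mul_zero]
        rw [hsum _ hvan]
        have hre : ∀ l : Subtype p, N k l.1 * P l.1 j = N₁ ⟨k, hk⟩ l * P₁ l ⟨j, hj⟩ := by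
          intro l
          rw [hP, hN₁]
          simp only [Matrix.of_apply, dif_pos hj, dif_pos l.2]
        rw [Finset.sum_congr rfl (fun l _ => hre l)]
        have hmm := congrFun (congrFun hNP₁ ⟨k, hk⟩) ⟨j, hj⟩
        rw [Matrix.mul_apply, Matrix.mul_diagonal] at hmm
        rw [hmm, hP]
        simp only [Matrix.of_apply, dif_pos hj, dif_pos hk]
        rw [hτeq j hj]
      · have hzero : ∀ l, N k l * P l j = 0 := by
          intro l
          by_cases hl : p l
          · rw [hNv2 k l hk hl, zero_mul]
          · rw [hP]
            simp only [Matrix.of_apply, dif_pos hj, dif_neg hl, mul_zero]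
        rw [Finset.sum_eq_zero (fun l _ => hzero l), hP]
        simp only [Matrix.of_apply, dif_pos hj, dif_neg hk, zero_mul]
    · have hterm : ∀ l, N k l * P l j = ((c j : ℝ) : ℂ)⁻¹ *
          ((a j : ℂ) * (N k l * (if l = j then 1 else 0)) + N k l * W l j) := by
        intro l
        rw [hP]
        simp only [Matrix.of_apply, dif_neg hj]
        ring
      rw [Finset.sum_congr rfl (fun l _ => hterm l), ← Finset.mul_sum, Finset.sum_add_distrib,
        ← Finset.mul_sum]
      have s1 : ∑ l, N k l * (if l = j then (1:ℂ) else 0) = N k j := by simp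
      have s2 : ∑ l, N k l * W l j = 2⁻¹ * ((σ k : ℂ) * W k j + (if k = j then 1 else 0)) := by
        have hterm2 : ∀ l, N k l * W l j
            = 2⁻¹ * ((if k = l then (σ k : ℂ) else 0) * W l j + W k l * W l j) := by
          intro l
          rw [hNe]
          ring
        rw [Finset.sum_congr rfl (fun l _ => hterm2 l), ← Finset.mul_sum,
          Finset.sum_add_distrib, hW2e k j]
        have s3 : ∑ l, (if k = l then (σ k : ℂ) else 0) * W l j = (σ k : ℂ) * W k j := by
          simp
        rw [s3]
      rw [s1, s2, hNe k j, hP]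
      simp only [Matrix.of_apply, dif_neg hj]
      by_cases hkj : k = j
      · subst hkj
        simp only [if_pos rfl, eq_self_iff_true, if_true]
        rw [hdiag0 k hj]
        have hkkC : (a k : ℂ) * (σ k : ℂ) + 1 = 2 * (τ k : ℂ) * (a k : ℂ) := by
          exact_mod_cast congrArg (fun x : ℝ => (x : ℂ)) (hkk k hj)
        linear_combination (((c k : ℝ) : ℂ)⁻¹ * 2⁻¹) * hkkC
      · simp only [if_neg hkj]
        by_cases hw : W k j = 0
        · rw [hw]
          ring
        · have h2 : (a j : ℂ) + (σ k : ℂ) = 2 * (τ j : ℂ) := by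
            exact_mod_cast congrArg (fun x : ℝ => (x : ℂ)) (hWτ k j hw hj)
          linear_combination (((c j : ℝ) : ℂ)⁻¹ * 2⁻¹ * W k j) * h2
  have hPPsq : P * Pᴴ = 1 := mul_eq_one_comm.mp hPP
  refine ⟨P, τ, hPP, hτnn, ?_, ?_⟩
  · calc N = N * (P * Pᴴ) := by rw [hPPsq, mul_one]
      _ = (N * P) * Pᴴ := by rw [mul_assoc]
      _ = (P * Matrix.diagonal (fun j => (τ j : ℂ))) * Pᴴ := by rw [hNPeq]
  · intro j
    refine ⟨hτgt j, hτlt j, ?_⟩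
    intro h
    have hpj : p j := h
    rw [hτeq j hpj]
    exact hρ01 ⟨j, hpj⟩


open Matrix

/-- If `A ∈ ℂ^{n×n}` is involutory with singular value pairs `(σⱼ, 1/σⱼ)` (including
pairs `(1,1)`), then `B = (1/2)(I + A)` has corresponding singular value pairs
`((σⱼ + 1/σⱼ)/2, 0)`, and the remaining singular values of `B` are `1` or `0`. -/
theorem involutory_half_add_singular_values {n : ℕ}
    (A U V : Matrix (Fin n) (Fin n) ℂ) (σ : Fin n → ℝ)
    (hA : A * A = 1)
    (hU : U ∈ Matrix.unitaryGroup (Fin n) ℂ) (hV : V ∈ Matrix.unitaryGroup (Fin n) ℂ)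
    (hpos : ∀ j, 0 < σ j)
    (hpair : ∀ j : Fin n, σ j.rev = (σ j)⁻¹)
    (hSVD : A = U * Matrix.diagonal (fun j => (σ j : ℂ)) * V.conjTranspose) :
    ∃ (U' V' : Matrix (Fin n) (Fin n) ℂ) (τ : Fin n → ℝ),
      U' ∈ Matrix.unitaryGroup (Fin n) ℂ ∧ V' ∈ Matrix.unitaryGroup (Fin n) ℂ ∧
      (∀ j, 0 ≤ τ j) ∧
      (1 / 2 : ℂ) • (1 + A) =
        U' * Matrix.diagonal (fun j => (τ j : ℂ)) * V'.conjTranspose ∧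
      ∀ j : Fin n,
        (τ j = (σ j + (σ j)⁻¹) / 2 ∧ τ j.rev = 0) ∨ τ j = 1 ∨ τ j = 0 := by
  classical
  set D : Matrix (Fin n) (Fin n) ℂ := Matrix.diagonal (fun j => (σ j : ℂ)) with hD
  set W : Matrix (Fin n) (Fin n) ℂ := Vᴴ * U with hW
  have hUU : Uᴴ * U = 1 := by
    have := Matrix.mem_unitaryGroup_iff'.mp hU
    simpa [Matrix.star_eq_conjTranspose] using this
  have hUU' : U * Uᴴ = 1 := by
    have := Matrix.mem_unitaryGroup_iff.mp hU
    simpa [Matrix.star_eq_conjTranspose] using this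
  have hVV : Vᴴ * V = 1 := by
    have := Matrix.mem_unitaryGroup_iff'.mp hV
    simpa [Matrix.star_eq_conjTranspose] using this
  have hVV' : V * Vᴴ = 1 := by
    have := Matrix.mem_unitaryGroup_iff.mp hV
    simpa [Matrix.star_eq_conjTranspose] using this
  have hWH : Wᴴ = Uᴴ * V := by
    rw [hW, Matrix.conjTranspose_mul, Matrix.conjTranspose_conjTranspose]
  have hW1 : Wᴴ * W = 1 := by
    have h0 : Wᴴ * W = Uᴴ * (V * Vᴴ) * U := by
      rw [hWH, hW]
      simp only [Matrix.mul_assoc]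
    rw [h0, hVV', Matrix.mul_one, hUU]
  have h1 : U * (D * W * D) * Vᴴ = 1 := by
    have h0 := hA
    rw [hSVD] at h0
    calc U * (D * W * D) * Vᴴ = (U * D * Vᴴ) * (U * D * Vᴴ) := by
          rw [hW]
          simp only [Matrix.mul_assoc]
      _ = 1 := h0
  have hDWD : D * W * D = Wᴴ := by
    rw [hWH]
    calc D * W * D = (Uᴴ * U) * (D * W * D) * (Vᴴ * V) := by
          rw [hUU, hVV, one_mul, mul_one]
      _ = Uᴴ * (U * (D * W * D) * Vᴴ) * V := by simp only [Matrix.mul_assoc]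
      _ = Uᴴ * 1 * V := by rw [h1]
      _ = Uᴴ * V := by rw [mul_one]
  have hkey : ∀ i j, (σ i : ℂ) * W i j * (σ j : ℂ) = star (W j i) := by
    intro i j
    have h2 := congrFun (congrFun hDWD i) j
    rw [hD] at h2
    simpa [Matrix.mul_apply, Matrix.diagonal_apply, Finset.sum_ite_eq, Finset.sum_ite_eq',
      Matrix.conjTranspose_apply, ite_mul, mul_ite, mul_comm, mul_left_comm] using h2
  have hsupp : ∀ i j, W i j ≠ 0 → σ i * σ j = 1 := by
    intro i j hw
    have h1' := hkey i j
    have h2' : (σ j : ℂ) * star (W j i) * (σ i : ℂ) = W i j := by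
      have h3 := congrArg star (hkey j i)
      rw [star_star] at h3
      rw [← h3]
      simp [star_mul', Complex.star_def, Complex.conj_ofReal]
    have h4 : (((σ i * σ j : ℝ) ^ 2 : ℝ) : ℂ) * W i j = W i j := by
      calc (((σ i * σ j : ℝ) ^ 2 : ℝ) : ℂ) * W i j
          = (σ j : ℂ) * ((σ i : ℂ) * W i j * (σ j : ℂ)) * (σ i : ℂ) := by push_cast; ring
        _ = (σ j : ℂ) * star (W j i) * (σ i : ℂ) := by rw [h1']
        _ = W i j := h2'
    have h5 : (((σ i * σ j : ℝ) ^ 2 : ℝ) : ℂ) = 1 :=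
      mul_right_cancel₀ hw (by rw [one_mul]; exact h4)
    have h6 : (σ i * σ j) ^ 2 = 1 := by exact_mod_cast h5
    have hp1 : 0 < σ i * σ j := mul_pos (hpos i) (hpos j)
    have h7 : (σ i * σ j - 1) * (σ i * σ j + 1) = 0 := by nlinarith [h6]
    rcases mul_eq_zero.mp h7 with h8 | h8
    · linarith
    · linarith
  have hWhm : Wᴴ = W := by
    apply Matrix.ext
    intro i j
    rw [Matrix.conjTranspose_apply]
    by_cases hw : W i j = 0
    · rw [← hkey i j, hw]
      ring
    · rw [← hkey i j]
      have h1' := hsupp i j hw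
      have h2' : (σ i : ℂ) * (σ j : ℂ) = 1 := by
        exact_mod_cast congrArg (fun x : ℝ => (x : ℂ)) h1'
      calc (σ i : ℂ) * W i j * (σ j : ℂ) = ((σ i : ℂ) * (σ j : ℂ)) * W i j := by ring
        _ = W i j := by rw [h2', one_mul]
  obtain ⟨P, τ, hPP, hτnn, hNdec, hτprop⟩ := core_svd σ hpos W hW1 hWhm hsupp
  have hPmem : P ∈ Matrix.unitaryGroup (Fin n) ℂ := by
    apply Matrix.mem_unitaryGroup_iff'.mpr
    rwa [Matrix.star_eq_conjTranspose]
  refine ⟨U * P, V * P, τ, mul_mem hU hPmem, mul_mem hV hPmem, hτnn, ?_, ?_⟩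
  · have hUWV : U * W * Vᴴ = 1 := by
      calc U * W * Vᴴ = U * Wᴴ * Vᴴ := by rw [hWhm]
        _ = U * (Uᴴ * V) * Vᴴ := by rw [hWH]
        _ = (U * Uᴴ) * (V * Vᴴ) := by simp only [Matrix.mul_assoc]
        _ = 1 := by rw [hUU', hVV', one_mul]
    have hBeq : (1 / 2 : ℂ) • (1 + A) = U * ((2⁻¹ : ℂ) • (D + W)) * Vᴴ := by
      rw [hSVD, Matrix.mul_smul, Matrix.smul_mul, Matrix.mul_add, Matrix.add_mul, hUWV,
        one_div, add_comm (U * D * Vᴴ) 1]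
    rw [hBeq, hNdec, Matrix.conjTranspose_mul]
    simp only [Matrix.mul_assoc]
  · intro j
    rcases lt_trichotomy (σ j) 1 with h | h | h
    · exact Or.inr (Or.inr ((hτprop j).2.1 h))
    · rcases (hτprop j).2.2 h with h0 | h1
      · exact Or.inr (Or.inr h0)
      · exact Or.inr (Or.inl h1)
    · left
      refine ⟨(hτprop j).1 h, ?_⟩
      have hrev : σ j.rev < 1 := by
        rw [hpair j]
        exact inv_lt_one_of_one_lt₀ h
      exact (hτprop j.rev).2.1 hrev
end

section
/- If A is skew-involutory and (u, v, σ) is a singular triplet of A, then (-v, u, 1/σ) is also a singular triplet of A. -/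
namespace Matrix

variable {ι R : Type*} [Fintype ι] [DecidableEq ι]

lemma conjTranspose_mul_self_eq_neg_one [Ring R] [StarRing R] {A : Matrix ι ι R}
    (hA : A * A = -1) : Aᴴ * Aᴴ = -1 := by
  rw [← conjTranspose_mul, hA, conjTranspose_neg, conjTranspose_one]

/-- Applying `A` to `A *ᵥ v = c • u` gives `-v = c • A *ᵥ u`. -/
lemma mulVec_eq_inv_smul_neg_of_mul_self_eq_neg_one [Field R] {A : Matrix ι ι R}
    (hA : A * A = -1) {u v : ι → R} {c : R} (hc : c ≠ 0) (h : A *ᵥ v = c • u) :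
    A *ᵥ u = c⁻¹ • -v := by
  have hAu : c • A *ᵥ u = -v := by
    rw [← mulVec_smul, ← h, mulVec_mulVec, hA, neg_mulVec, one_mulVec]
  rw [← hAu, smul_smul, inv_mul_cancel₀ hc, one_smul]

end Matrix

theorem skewInvolutory_singular_triplet_pair_general {n : ℕ} (A : Matrix (Fin n) (Fin n) ℂ)
    (hA : A * A = -1) (u v : Fin n → ℂ) (σ : ℝ) (hσ : 0 < σ)
    (h1 : A.mulVec v = (σ : ℂ) • u) (h2 : A.conjTranspose.mulVec u = (σ : ℂ) • v) :
    A.mulVec u = ((σ⁻¹ : ℝ) : ℂ) • (-v) ∧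
    A.conjTranspose.mulVec (-v) = ((σ⁻¹ : ℝ) : ℂ) • u := by
  have hσ0 : (σ : ℂ) ≠ 0 := by exact_mod_cast hσ.ne'
  rw [Complex.ofReal_inv]
  refine ⟨A.mulVec_eq_inv_smul_neg_of_mul_self_eq_neg_one hA hσ0 h1, ?_⟩
  rw [Matrix.mulVec_neg, Matrix.mulVec_eq_inv_smul_neg_of_mul_self_eq_neg_one
    (Matrix.conjTranspose_mul_self_eq_neg_one hA) hσ0 h2, smul_neg, neg_neg]

/-- If `A` is skew-involutory and `(u, v, σ)` is a singular triplet of `A`, then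
`(-v, u, 1/σ)` is also a singular triplet of `A`. -/
theorem skewInvolutory_singular_triplet_pair {n : ℕ} (A : Matrix (Fin n) (Fin n) ℂ)
    (hA : A * A = -1) (u v : Fin n → ℂ) (σ : ℝ) (hσ : 0 < σ)
    (hu : dotProduct (star u) u = 1) (hv : dotProduct (star v) v = 1)
    (h1 : A.mulVec v = (σ : ℂ) • u) (h2 : A.conjTranspose.mulVec u = (σ : ℂ) • v) :
    A.mulVec u = ((σ⁻¹ : ℝ) : ℂ) • (-v) ∧
    A.conjTranspose.mulVec (-v) = ((σ⁻¹ : ℝ) : ℂ) • u :=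
  skewInvolutory_singular_triplet_pair_general A hA u v σ hσ h1 h2
end

section
/- If A is coninvolutory and (u, v, σ) is a singular triplet of A, then (conj(v), conj(u), 1/σ) is also a singular triplet of A. -/
/-!
Writing `Ā` for the entrywise conjugate, `A Ā = 1` makes `Ā = A⁻¹`. Conjugating `A v = σ u` gives
`Ā v̄ = σ ū`, and applying `A` yields `v̄ = σ A ū`, i.e. `A ū = σ⁻¹ v̄`. The second relation is the
same argument for `Aᴴ`, which is again coninvolutory since `Aᴴ · conj(Aᴴ) = (A Ā)ᵀ`.
-/

namespace Matrix

variable {n R : Type*} [Fintype n] [DecidableEq n]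

def IsConinvolutory [Semiring R] [Star R] (A : Matrix n n R) : Prop :=
  A * A.map star = 1

omit [DecidableEq n] in
theorem map_star_mulVec_star [CommSemiring R] [StarRing R] {m : Type*} (A : Matrix m n R)
    (v : n → R) : A.map star *ᵥ star v = star (A *ᵥ v) := by
  rw [star_mulVec, conjTranspose, transpose_map, vecMul_transpose]

theorem IsConinvolutory.conjTranspose [CommSemiring R] [StarRing R] {A : Matrix n n R}
    (hA : A.IsConinvolutory) : Aᴴ.IsConinvolutory := by
  have h_map : Aᴴ.map star = Aᵀ := by ext; simp
  rw [IsConinvolutory, h_map, Matrix.conjTranspose, transpose_map, ← transpose_mul, hA,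
    transpose_one]

theorem IsConinvolutory.star_eq_smul_mulVec_star [CommSemiring R] [StarRing R]
    {A : Matrix n n R} (hA : A.IsConinvolutory) {u v : n → R} {c : R} (h : A *ᵥ v = c • u) :
    star v = star c • A *ᵥ star u := by
  rw [← mulVec_smul, ← star_smul, ← h, ← map_star_mulVec_star, mulVec_mulVec, hA, one_mulVec]

theorem IsConinvolutory.mulVec_star_eq_inv_smul [Field R] [StarRing R] {A : Matrix n n R}
    (hA : A.IsConinvolutory) {u v : n → R} {c : R} (hc : c ≠ 0) (h : A *ᵥ v = c • u) :
    A *ᵥ star u = (star c)⁻¹ • star v := by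
  rw [eq_inv_smul_iff₀ (star_ne_zero.mpr hc), hA.star_eq_smul_mulVec_star h]

end Matrix

theorem coninvolutory_singular_triplet_pair_general {n : ℕ} (A : Matrix (Fin n) (Fin n) ℂ)
    (hA : A * A.map (starRingEnd ℂ) = 1) (u v : Fin n → ℂ) (σ : ℝ) (hσ : 0 < σ)
    (h1 : A.mulVec v = (σ : ℂ) • u) (h2 : A.conjTranspose.mulVec u = (σ : ℂ) • v) :
    A.mulVec (fun i => starRingEnd ℂ (u i)) = ((σ⁻¹ : ℝ) : ℂ) • (fun i => starRingEnd ℂ (v i)) ∧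
    A.conjTranspose.mulVec (fun i => starRingEnd ℂ (v i)) =
      ((σ⁻¹ : ℝ) : ℂ) • (fun i => starRingEnd ℂ (u i)) := by
  have hA' : A.IsConinvolutory := hA
  have hσ' : (σ : ℂ) ≠ 0 := Complex.ofReal_ne_zero.mpr hσ.ne'
  have hσinv : ((σ⁻¹ : ℝ) : ℂ) = (star (σ : ℂ))⁻¹ := by
    rw [Complex.ofReal_inv, Complex.star_def, Complex.conj_ofReal]
  rw [hσinv]
  exact ⟨hA'.mulVec_star_eq_inv_smul hσ' h1, hA'.conjTranspose.mulVec_star_eq_inv_smul hσ' h2⟩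

/-- If `A` is coninvolutory and `(u, v, σ)` is a singular triplet of `A`, then
`(conj v, conj u, 1/σ)` is also a singular triplet of `A`. -/
theorem coninvolutory_singular_triplet_pair {n : ℕ} (A : Matrix (Fin n) (Fin n) ℂ)
    (hA : A * A.map (starRingEnd ℂ) = 1) (u v : Fin n → ℂ) (σ : ℝ) (hσ : 0 < σ)
    (hu : dotProduct (star u) u = 1) (hv : dotProduct (star v) v = 1)
    (h1 : A.mulVec v = (σ : ℂ) • u) (h2 : A.conjTranspose.mulVec u = (σ : ℂ) • v) :
    A.mulVec (fun i => starRingEnd ℂ (u i)) = ((σ⁻¹ : ℝ) : ℂ) • (fun i => starRingEnd ℂ (v i)) ∧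
    A.conjTranspose.mulVec (fun i => starRingEnd ℂ (v i)) =
      ((σ⁻¹ : ℝ) : ℂ) • (fun i => starRingEnd ℂ (u i)) :=
  coninvolutory_singular_triplet_pair_general A hA u v σ hσ h1 h2
end

section
/- Any coninvolutory matrix of odd size n has at least one singular value equal to 1. -/
open Matrix Finset

/-- Any coninvolutory matrix of odd size `n` has at least one singular value equal to `1`. -/
theorem coninvolutory_odd_has_singular_value_one {n : ℕ} (hn : Odd n)
    (A U V : Matrix (Fin n) (Fin n) ℂ) (σ : Fin n → ℝ)
    (hA : A * A.map (starRingEnd ℂ) = 1)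
    (hU : U ∈ Matrix.unitaryGroup (Fin n) ℂ) (hV : V ∈ Matrix.unitaryGroup (Fin n) ℂ)
    (hpos : ∀ j, 0 ≤ σ j)
    (hSVD : A = U * Matrix.diagonal (fun j => (σ j : ℂ)) * V.conjTranspose) :
    ∃ j : Fin n, σ j = 1 := by
  classical
  set c := starRingEnd ℂ with hc
  set D : Matrix (Fin n) (Fin n) ℂ := diagonal (fun j => (σ j : ℂ)) with hDdef
  -- unitary facts
  have hUU : U * Uᴴ = 1 := by
    have := Matrix.mem_unitaryGroup_iff.mp hU; rwa [star_eq_conjTranspose] at this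
  have hUU' : Uᴴ * U = 1 := by
    have := Matrix.mem_unitaryGroup_iff'.mp hU; rwa [star_eq_conjTranspose] at this
  have hVV : V * Vᴴ = 1 := by
    have := Matrix.mem_unitaryGroup_iff.mp hV; rwa [star_eq_conjTranspose] at this
  have hVV' : Vᴴ * V = 1 := by
    have := Matrix.mem_unitaryGroup_iff'.mp hV; rwa [star_eq_conjTranspose] at this
  -- conjugate matrices
  have hDmap : D.map c = D := by
    rw [hDdef, Matrix.diagonal_map (map_zero c)]
    simp [hc, Complex.conj_ofReal]
  have hconjH : ∀ M : Matrix (Fin n) (Fin n) ℂ, Mᴴ.map c = Mᵀ := by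
    intro M
    have : Mᴴ = Mᵀ.map c := rfl
    rw [this, Matrix.map_map]
    have : (⇑c ∘ ⇑c) = id := by funext z; simp [hc]
    rw [this, Matrix.map_id]
  -- conj A
  have hAconj : A.map c = U.map c * D * Vᵀ := by
    rw [hSVD, Matrix.map_mul, Matrix.map_mul, hDmap, hconjH]
  -- conjugated unitary facts
  have hUbUt : U.map c * Uᵀ = 1 := by
    have : (U * Uᴴ).map c = (1 : Matrix (Fin n) (Fin n) ℂ).map c := by rw [hUU]
    rwa [Matrix.map_mul, hconjH, Matrix.map_one c (map_zero c) (map_one c)] at this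
  have hVtVb : Vᵀ * V.map c = 1 := by
    have : (Vᴴ * V).map c = (1 : Matrix (Fin n) (Fin n) ℂ).map c := by rw [hVV']
    rwa [Matrix.map_mul, hconjH, Matrix.map_one c (map_zero c) (map_one c)] at this
  have hVbVt : V.map c * Vᵀ = 1 := by
    have : (V * Vᴴ).map c = (1 : Matrix (Fin n) (Fin n) ℂ).map c := by rw [hVV]
    rwa [Matrix.map_mul, hconjH, Matrix.map_one c (map_zero c) (map_one c)] at this
  set M : Matrix (Fin n) (Fin n) ℂ := Vᴴ * U.map c with hMdef
  set B : Matrix (Fin n) (Fin n) ℂ := Uᴴ * V.map c with hBdef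
  -- key equation: D * M * D = B
  have hKey : D * M * D = B := by
    have h1 : U * D * Vᴴ * (U.map c * D * Vᵀ) = 1 := by rw [← hSVD, ← hAconj]; exact hA
    have h2 : Uᴴ * (U * D * Vᴴ * (U.map c * D * Vᵀ)) * V.map c = Uᴴ * 1 * V.map c := by
      rw [h1]
    calc D * M * D = (Uᴴ * U) * D * M * D * 1 := by rw [hUU', one_mul, mul_one]
      _ = (Uᴴ * U) * D * M * D * (Vᵀ * V.map c) := by rw [hVtVb]
      _ = Uᴴ * (U * D * Vᴴ * (U.map c * D * Vᵀ)) * V.map c := by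
          rw [hMdef]; simp only [mul_assoc]
      _ = B := by rw [h2, mul_one, hBdef]
  -- M and B are unitary
  have hMMh : M * Mᴴ = 1 := by
    have hUbH : (U.map c)ᴴ = Uᵀ := by
      have : (U.map c)ᴴ = (Uᴴ).map c := (Matrix.conjTranspose_map c (fun z => by simp)).symm
      rw [this, hconjH]
    rw [hMdef, Matrix.conjTranspose_mul, hUbH, Matrix.conjTranspose_conjTranspose]
    calc Vᴴ * U.map c * (Uᵀ * V) = Vᴴ * (U.map c * Uᵀ) * V := by simp only [mul_assoc]
      _ = Vᴴ * V := by rw [hUbUt, mul_one]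
      _ = 1 := hVV'
  have hBBh : B * Bᴴ = 1 := by
    have hVbH : (V.map c)ᴴ = Vᵀ := by
      have : (V.map c)ᴴ = (Vᴴ).map c := (Matrix.conjTranspose_map c (fun z => by simp)).symm
      rw [this, hconjH]
    rw [hBdef, Matrix.conjTranspose_mul, hVbH, Matrix.conjTranspose_conjTranspose]
    calc Uᴴ * V.map c * (Vᵀ * U) = Uᴴ * (V.map c * Vᵀ) * U := by simp only [mul_assoc]
      _ = Uᴴ * U := by rw [hVbVt, mul_one]
      _ = 1 := hUU'
  have hDH : Dᴴ = D := by
    rw [hDdef, Matrix.diagonal_conjTranspose]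
    simp [Function.comp, Pi.star_def, Complex.conj_ofReal]
  -- all singular values nonzero
  have hdetA : A.det ≠ 0 := by
    intro h
    have := congrArg Matrix.det hA
    rw [Matrix.det_mul, h, zero_mul, Matrix.det_one] at this
    exact zero_ne_one this
  have hσne : ∀ j, σ j ≠ 0 := by
    intro j hj
    apply hdetA
    rw [hSVD, Matrix.det_mul, Matrix.det_mul, hDdef, Matrix.det_diagonal]
    have : ∏ i : Fin n, ((σ i : ℂ)) = 0 := by
      apply Finset.prod_eq_zero (Finset.mem_univ j)
      rw [hj]; simp
    rw [this]; ring
  have hdetD : D.det ≠ 0 := by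
    rw [hDdef, Matrix.det_diagonal]
    apply Finset.prod_ne_zero_iff.mpr
    intro j _
    exact_mod_cast hσne j
  have : Invertible D := Matrix.invertibleOfIsUnitDet D (Ne.isUnit hdetD)
  -- M D² Mᴴ = E
  set E : Matrix (Fin n) (Fin n) ℂ := diagonal (fun j => ((σ j : ℂ) ^ 2)⁻¹) with hEdef
  have hDED : D * E * D = 1 := by
    rw [hDdef, hEdef, Matrix.diagonal_mul_diagonal, Matrix.diagonal_mul_diagonal, ← Matrix.diagonal_one]
    refine congrArg Matrix.diagonal (funext fun j => ?_)
    have h : (σ j : ℂ) ≠ 0 := by exact_mod_cast hσne j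
    field_simp
  have hDMD : D * (M * (D * D) * Mᴴ) * D = 1 := by
    have h1 : (D * M * D) * (D * M * D)ᴴ = 1 := by rw [hKey]; exact hBBh
    have h2 : (D * M * D)ᴴ = D * (Mᴴ * D) := by
      rw [Matrix.conjTranspose_mul, Matrix.conjTranspose_mul, hDH]
    rw [h2] at h1
    calc D * (M * (D * D) * Mᴴ) * D = D * M * D * (D * (Mᴴ * D)) := by simp only [mul_assoc]
      _ = 1 := h1
  have hME : M * (D * D) * Mᴴ = E := by
    have h1 : ⅟D * (D * (M * (D * D) * Mᴴ) * D) * ⅟D = ⅟D * 1 * ⅟D := by rw [hDMD]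
    have h2 : ⅟D * (D * E * D) * ⅟D = ⅟D * 1 * ⅟D := by rw [hDED]
    have e1 : ∀ X : Matrix (Fin n) (Fin n) ℂ, ⅟D * (D * X * D) * ⅟D = X := by
      intro X
      calc ⅟D * (D * X * D) * ⅟D = (⅟D * D) * X * (D * ⅟D) := by simp only [mul_assoc]
        _ = X := by rw [invOf_mul_self, mul_invOf_self, one_mul, mul_one]
    rw [e1] at h1 h2
    rw [h1, ← h2]
  -- determinant identity
  have hdet : (D * D - 1).det = (E - 1).det := by
    have h1 : M * (D * D - 1) * Mᴴ = E - 1 := by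
      rw [Matrix.mul_sub, Matrix.sub_mul, mul_one, hME, hMMh]
    have h2 : (M * (D * D - 1) * Mᴴ).det = (D * D - 1).det := by
      rw [Matrix.det_mul, Matrix.det_mul]
      have : M.det * Mᴴ.det = 1 := by rw [← Matrix.det_mul, hMMh, Matrix.det_one]
      calc M.det * (D * D - 1).det * Mᴴ.det = (D * D - 1).det * (M.det * Mᴴ.det) := by ring
        _ = (D * D - 1).det := by rw [this, mul_one]
    rw [← h2, h1]
  -- turn into product identity over ℂ
  have hprodC : (∏ j : Fin n, ((σ j : ℂ) ^ 2 - 1)) = ∏ j : Fin n, (((σ j : ℂ) ^ 2)⁻¹ - 1) := by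
    have e1 : D * D - 1 = diagonal (fun j => (σ j : ℂ) ^ 2 - 1) := by
      rw [hDdef, Matrix.diagonal_mul_diagonal, ← Matrix.diagonal_one, Matrix.diagonal_sub]
      exact congrArg Matrix.diagonal (funext fun j => by ring)
    have e2 : E - 1 = diagonal (fun j => ((σ j : ℂ) ^ 2)⁻¹ - 1) := by
      rw [hEdef, ← Matrix.diagonal_one, Matrix.diagonal_sub]
    rw [e1, e2, Matrix.det_diagonal, Matrix.det_diagonal] at hdet
    exact hdet
  -- real product identity
  have hprodR : (∏ j : Fin n, (σ j ^ 2 - 1)) = ∏ j : Fin n, ((σ j ^ 2)⁻¹ - 1) := by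
    have := hprodC
    push_cast at this
    exact_mod_cast this
  -- endgame
  have hQ : (0:ℝ) ≤ ∏ j : Fin n, (σ j ^ 2)⁻¹ :=
    Finset.prod_nonneg fun j _ => inv_nonneg.mpr (sq_nonneg _)
  have hfact : ∀ j : Fin n, ((σ j ^ 2)⁻¹ - 1 : ℝ) = (-(σ j ^ 2 - 1)) * (σ j ^ 2)⁻¹ := by
    intro j
    have h : σ j ≠ 0 := hσne j
    field_simp
    ring
  have hsplit : (∏ j : Fin n, ((σ j ^ 2)⁻¹ - 1 : ℝ))
      = (-1) ^ n * (∏ j : Fin n, (σ j ^ 2 - 1)) * ∏ j : Fin n, (σ j ^ 2)⁻¹ := by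
    calc (∏ j : Fin n, ((σ j ^ 2)⁻¹ - 1 : ℝ))
        = ∏ j : Fin n, ((-(σ j ^ 2 - 1)) * (σ j ^ 2)⁻¹) := Finset.prod_congr rfl fun j _ => hfact j
      _ = (∏ j : Fin n, (-(σ j ^ 2 - 1))) * ∏ j : Fin n, (σ j ^ 2)⁻¹ := Finset.prod_mul_distrib
      _ = (-1) ^ n * (∏ j : Fin n, (σ j ^ 2 - 1)) * ∏ j : Fin n, (σ j ^ 2)⁻¹ := by
          have : (∏ j : Fin n, (-(σ j ^ 2 - 1) : ℝ))
              = (-1 : ℝ) ^ n * ∏ j : Fin n, (σ j ^ 2 - 1) := by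
            rw [show (fun j : Fin n => (-(σ j ^ 2 - 1) : ℝ)) = fun j => (-1) * (σ j ^ 2 - 1) from
              funext fun j => by ring]
            rw [Finset.prod_mul_distrib, Finset.prod_const, Finset.card_univ, Fintype.card_fin]
          rw [this]
  have hneg1 : ((-1 : ℝ)) ^ n = -1 := Odd.neg_one_pow hn
  set P : ℝ := ∏ j : Fin n, (σ j ^ 2 - 1) with hP
  set Q : ℝ := ∏ j : Fin n, (σ j ^ 2)⁻¹ with hQdef
  have hPQ : P = -P * Q := by
    have h := hprodR
    rw [hsplit, hneg1] at h
    linarith [h]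
  have hP0 : P = 0 := by
    have h : P * (1 + Q) = 0 := by linarith [hPQ]
    rcases mul_eq_zero.mp h with h | h
    · exact h
    · linarith
  obtain ⟨j, _, hj⟩ := Finset.prod_eq_zero_iff.mp hP0
  have hj2 : (σ j - 1) * (σ j + 1) = 0 := by nlinarith [hj]
  rcases mul_eq_zero.mp hj2 with h | h
  · exact ⟨j, by linarith⟩
  · exact absurd (hpos j) (by intro hh; linarith)
end

section
/- Every coninvolutory matrix A ∈ ℂ^{n×n} is consimilar to the identity: there exists nonsingular S ∈ ℂ^{n×n} with A = S·conj(S)⁻¹ (equivalently, all coneigenvalues of A equal 1). -/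
open Polynomial Matrix

/-- Every coninvolutory matrix `A ∈ ℂ^{n×n}` is consimilar to the identity:
there exists a nonsingular `S` with `A = S · conj(S)⁻¹`. -/
theorem coninvolutory_consimilar_one {n : ℕ} (A : Matrix (Fin n) (Fin n) ℂ)
    (hA : A * A.map (starRingEnd ℂ) = 1) :
    ∃ S : (Matrix (Fin n) (Fin n) ℂ)ˣ,
      A = (S : Matrix (Fin n) (Fin n) ℂ) *
        (((S⁻¹ : (Matrix (Fin n) (Fin n) ℂ)ˣ) : Matrix (Fin n) (Fin n) ℂ)).map
          (starRingEnd ℂ) := by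
  classical
  -- det A ≠ 0
  have hdetA : A.det ≠ 0 := by
    intro h
    have := congrArg Matrix.det hA
    rw [Matrix.det_mul, h, zero_mul, Matrix.det_one] at this
    exact zero_ne_one this
  -- Polynomial whose eval at s is det ((s+i) • A + (s-i) • 1)
  set M : Matrix (Fin n) (Fin n) ℂ[X] :=
    (X + C Complex.I) • A.map C + (X - C Complex.I) • 1 with hM
  set P : ℂ[X] := M.det with hP
  have heval : ∀ s : ℂ, P.eval s =
      Matrix.det ((s + Complex.I) • A + (s - Complex.I) • (1 : Matrix (Fin n) (Fin n) ℂ)) := by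
    intro s
    have := (Polynomial.evalRingHom s).map_det M
    rw [hP, ← Polynomial.coe_evalRingHom, this]
    congr 1
    ext k l
    simp [hM, Matrix.map_apply, Matrix.add_apply, Matrix.smul_apply, Matrix.one_apply,
      apply_ite (Polynomial.eval s), apply_ite ((· * ·) (s - Complex.I)), mul_comm]
  -- P ≠ 0 since eval at i is nonzero
  have hPne : P ≠ 0 := by
    intro h0
    have h := heval Complex.I
    rw [h0] at h
    simp only [Polynomial.eval_zero, sub_self, zero_smul, add_zero] at h
    rw [Matrix.det_smul] at h
    have : (Complex.I + Complex.I) ^ n ≠ 0 := by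
      apply pow_ne_zero
      simpa using Complex.I_ne_zero
    exact hdetA (by field_simp at h; exact (mul_eq_zero.mp h.symm).resolve_left (pow_ne_zero _ (mul_ne_zero Complex.I_ne_zero (by norm_num))))
  -- choose a real t avoiding roots of P
  obtain ⟨t, ht⟩ := Infinite.exists_notMem_finset
    (P.roots.toFinset.preimage (fun t : ℝ => (t : ℂ))
      (Complex.ofReal_injective.injOn))
  have hroot : P.eval (t : ℂ) ≠ 0 := by
    intro h
    apply ht
    rw [Finset.mem_preimage, Multiset.mem_toFinset, Polynomial.mem_roots hPne]
    exact h
  set μ : ℂ := (t : ℂ) + Complex.I with hμ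
  have hconjμ : (starRingEnd ℂ) μ = (t : ℂ) - Complex.I := by
    simp [hμ, sub_eq_add_neg, Complex.conj_I]
  set Smat : Matrix (Fin n) (Fin n) ℂ := μ • A + ((t : ℂ) - Complex.I) • 1 with hS
  have hdetS : Smat.det ≠ 0 := by
    rw [hS]; rw [heval (t : ℂ)] at hroot; exact hroot
  have hUnit : IsUnit Smat := (Matrix.isUnit_iff_isUnit_det _).mpr (Ne.isUnit hdetS)
  refine ⟨hUnit.unit, ?_⟩
  -- key identity: A * conj(Smat) = Smat
  have hkey : A * Smat.map (starRingEnd ℂ) = Smat := by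
    have hmap : Smat.map (starRingEnd ℂ)
        = ((t : ℂ) - Complex.I) • A.map (starRingEnd ℂ) + μ • 1 := by
      ext k l
      simp [hS, hμ, Matrix.map_apply, Matrix.add_apply, Matrix.smul_apply, Matrix.one_apply,
        apply_ite (starRingEnd ℂ), sub_eq_add_neg, Complex.conj_I]
    rw [hmap, Matrix.mul_add, Matrix.mul_smul, Matrix.mul_smul, hA, Matrix.mul_one, hS]
    ring_nf
    rw [add_comm]
  -- conclude
  have hSval : (hUnit.unit : Matrix (Fin n) (Fin n) ℂ) = Smat := rfl
  have h1 : Smat.map (starRingEnd ℂ) *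
      ((hUnit.unit⁻¹ : (Matrix (Fin n) (Fin n) ℂ)ˣ) : Matrix (Fin n) (Fin n) ℂ).map
        (starRingEnd ℂ) = 1 := by
    have : Smat * ((hUnit.unit⁻¹ : (Matrix (Fin n) (Fin n) ℂ)ˣ) : Matrix (Fin n) (Fin n) ℂ) = 1 := by
      exact hUnit.unit.mul_inv
    have := congrArg (Matrix.map · (starRingEnd ℂ)) this
    simp [Matrix.map_mul] at this; simpa using this
  calc A = A * 1 := (mul_one A).symm
    _ = A * (Smat.map (starRingEnd ℂ) *
        ((hUnit.unit⁻¹ : (Matrix (Fin n) (Fin n) ℂ)ˣ) : Matrix (Fin n) (Fin n) ℂ).map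
          (starRingEnd ℂ)) := by rw [h1]
    _ = (A * Smat.map (starRingEnd ℂ)) *
        ((hUnit.unit⁻¹ : (Matrix (Fin n) (Fin n) ℂ)ˣ) : Matrix (Fin n) (Fin n) ℂ).map
          (starRingEnd ℂ) := by rw [mul_assoc]
    _ = _ := by rw [hkey, hSval]
end

section
/- If A ∈ ℂ^{2n×2n} is skew-coninvolutory and (u, v, σ) is a singular triplet of A, then (-conj(v), conj(u), 1/σ) is also a singular triplet of A; consequently the singular values of A appear in pairs (σ, 1/σ). -/
/-!
Conjugating `A v = σ u` and applying `A` gives `A (conj u) = -σ⁻¹ conj v`, since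
`A conj(A) = -1`; the same argument for `Aᴴ`, which is again skew-coninvolutory, gives the second
equation.

For the pairing of singular values write `A = U Σ Vᴴ`. Then `W = Vᴴ conj(U)` is unitary and
`Σ W Σ = -Wᵀ`, so `W i j ≠ 0` forces `σ i * σ j = 1`. Since `(‖W i j‖²)` is doubly stochastic,
the `k + 1` indices `i ≤ k` (where `σ i ≥ σ k`) are matched into at least `k + 1` indices `j` with
`σ j ≤ (σ k)⁻¹`, whence `σ k.rev ≤ (σ k)⁻¹`. The same bound for the antitone sequence
`j ↦ (σ j.rev)⁻¹` gives the reverse inequality.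
-/

open Finset Matrix

namespace Matrix

variable {n : Type*}

theorem mul_eq_neg_one_comm [Fintype n] [DecidableEq n] {R : Type*} [CommRing R]
    {M N : Matrix n n R} : M * N = -1 ↔ N * M = -1 := by
  rw [← neg_eq_iff_eq_neg, ← neg_eq_iff_eq_neg, ← mul_neg, ← neg_mul, mul_eq_one_comm]

section Conj

variable {R : Type*} [CommRing R] [StarRing R]

theorem transpose_map_conj (M : Matrix n n R) : (M.map (starRingEnd R))ᵀ = Mᴴ := rfl

theorem conjTranspose_map_conj (M : Matrix n n R) : (M.map (starRingEnd R))ᴴ = Mᵀ := by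
  ext; simp [starRingEnd_apply]

theorem map_conj_conjTranspose (M : Matrix n n R) : Mᴴ.map (starRingEnd R) = Mᵀ := by
  ext; simp [starRingEnd_apply]

theorem map_conj_mulVec_conj [Fintype n] (M : Matrix n n R) (x : n → R) :
    M.map (starRingEnd R) *ᵥ (fun i => starRingEnd R (x i)) =
      fun i => starRingEnd R ((M *ᵥ x) i) := by
  ext i
  simp [mulVec, dotProduct]

variable [Fintype n] [DecidableEq n]

theorem map_conj_mem_unitaryGroup {U : Matrix n n R} (hU : U ∈ unitaryGroup n R) :
    U.map (starRingEnd R) ∈ unitaryGroup n R := by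
  rw [mem_unitaryGroup_iff, star_eq_conjTranspose, conjTranspose_map_conj,
    ← map_conj_conjTranspose, ← Matrix.map_mul, ← star_eq_conjTranspose,
    mem_unitaryGroup_iff.mp hU, Matrix.map_one _ (map_zero _) (map_one _)]

theorem conjTranspose_mul_map_conj_eq_neg_one {A : Matrix n n R}
    (hA : A * A.map (starRingEnd R) = -1) : Aᴴ * Aᴴ.map (starRingEnd R) = -1 := by
  have h := congrArg conjTranspose (mul_eq_neg_one_comm.mp hA)
  rwa [conjTranspose_mul, conjTranspose_neg, conjTranspose_one, conjTranspose_map_conj,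
    ← map_conj_conjTranspose] at h

end Conj

variable [Fintype n] [DecidableEq n]

theorem mulVec_eq_inv_smul_neg_of_mul_eq_neg_one {K : Type*} [Field K] {M N : Matrix n n K}
    (h : M * N = -1) {x y : n → K} {c : K} (hc : c ≠ 0) (hN : N *ᵥ x = c • y) :
    M *ᵥ y = c⁻¹ • -x := by
  rw [eq_inv_smul_iff₀ hc, ← mulVec_smul, ← hN, mulVec_mulVec, h, neg_mulVec, one_mulVec]

theorem mulVec_conj_of_mul_map_conj_eq_neg_one {K : Type*} [Field K] [StarRing K]
    {A : Matrix n n K} (hA : A * A.map (starRingEnd K) = -1) {x y : n → K} {c : K} (hc : c ≠ 0)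
    (h : A *ᵥ x = c • y) :
    A *ᵥ (fun i => starRingEnd K (y i)) =
      (starRingEnd K c)⁻¹ • -(fun i => starRingEnd K (x i)) := by
  refine mulVec_eq_inv_smul_neg_of_mul_eq_neg_one hA (by simpa using hc) ?_
  rw [map_conj_mulVec_conj, h]
  ext i
  simp

theorem map_norm_sq_mem_doublyStochastic {𝕜 : Type*} [RCLike 𝕜] {W : Matrix n n 𝕜}
    (hW : W ∈ unitaryGroup n 𝕜) : W.map (‖·‖ ^ 2) ∈ doublyStochastic ℝ n := by
  have row_sum {M : Matrix n n 𝕜} (hM : M * star M = 1) (i : n) : ∑ j, ‖M i j‖ ^ 2 = 1 := by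
    have h := congrFun (congrFun hM i) i
    simp only [mul_apply, star_apply, one_apply_eq, ← starRingEnd_apply, RCLike.mul_conj] at h
    exact_mod_cast h
  refine mem_doublyStochastic_iff_sum.mpr
    ⟨fun _ _ => sq_nonneg _, row_sum (mem_unitaryGroup_iff.mp hW), fun j => ?_⟩
  simpa using row_sum (M := star W) (by rw [star_star]; exact mem_unitaryGroup_iff'.mp hW) j

theorem card_le_card_of_mem_doublyStochastic {R : Type*} [Semiring R] [PartialOrder R]
    [IsOrderedRing R] [CharZero R] {M : Matrix n n R} (hM : M ∈ doublyStochastic R n)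
    {rows cols : Finset n} (h : ∀ i ∈ rows, ∀ j, M i j ≠ 0 → j ∈ cols) : #rows ≤ #cols := by
  suffices (#rows : R) ≤ #cols by exact_mod_cast this
  calc (#rows : R) = ∑ i ∈ rows, ∑ j, M i j := by
        simp [sum_row_of_mem_doublyStochastic hM]
    _ = ∑ i ∈ rows, ∑ j ∈ cols, M i j := by
        refine sum_congr rfl fun i hi => (sum_subset (subset_univ _) fun j _ hj => ?_).symm
        by_contra hne
        exact hj (h i hi j hne)
    _ = ∑ j ∈ cols, ∑ i ∈ rows, M i j := sum_comm
    _ ≤ ∑ j ∈ cols, ∑ i, M i j := sum_le_sum fun j _ => sum_le_sum_of_subset_of_nonneg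
        (subset_univ _) fun i _ _ => nonneg_of_mem_doublyStochastic hM
    _ = #cols := by simp [sum_col_of_mem_doublyStochastic hM]

theorem diagonal_mul_mul_diagonal_eq_neg_transpose {𝕜 : Type*} [RCLike 𝕜] {A U V : Matrix n n 𝕜}
    {σ : n → ℝ} (hA : A * A.map (starRingEnd 𝕜) = -1) (hU : U ∈ unitaryGroup n 𝕜)
    (hV : V ∈ unitaryGroup n 𝕜) (hSVD : A = U * diagonal (fun j => (σ j : 𝕜)) * Vᴴ) :
    diagonal (fun j => (σ j : 𝕜)) * (Vᴴ * U.map (starRingEnd 𝕜)) *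
      diagonal (fun j => (σ j : 𝕜)) = -(Vᴴ * U.map (starRingEnd 𝕜))ᵀ := by
  set D := diagonal (fun j => (σ j : 𝕜))
  set Uc := U.map (starRingEnd 𝕜)
  set Vc := V.map (starRingEnd 𝕜)
  have hUu : Uᴴ * U = 1 := mem_unitaryGroup_iff'.mp hU
  have hVc : Vᵀ * Vc = 1 := by
    simpa only [star_eq_conjTranspose, conjTranspose_map_conj]
      using mem_unitaryGroup_iff'.mp (map_conj_mem_unitaryGroup hV)
  have hAc : A.map (starRingEnd 𝕜) = Uc * D * Vᵀ := by
    rw [hSVD, Matrix.map_mul, Matrix.map_mul, map_conj_conjTranspose, diagonal_map (map_zero _)]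
    simp [D, Uc]
  calc D * (Vᴴ * Uc) * D = (Uᴴ * U) * D * (Vᴴ * Uc) * D * (Vᵀ * Vc) := by
        rw [hUu, hVc, Matrix.one_mul, Matrix.mul_one]
    _ = Uᴴ * (A * A.map (starRingEnd 𝕜)) * Vc := by
        rw [hAc, hSVD]; simp only [Matrix.mul_assoc]
    _ = -(Vᴴ * Uc)ᵀ := by
        rw [hA, transpose_mul, transpose_map_conj, conjTranspose_transpose]
        simp [Vc]

theorem mul_eq_one_of_diagonal_mul_mul_diagonal_eq_neg_transpose {𝕜 : Type*} [RCLike 𝕜]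
    {σ : n → ℝ} (hσ : ∀ j, 0 < σ j) {W : Matrix n n 𝕜}
    (hW : diagonal (fun j => (σ j : 𝕜)) * W * diagonal (fun j => (σ j : 𝕜)) = -Wᵀ) {i j : n}
    (hij : W i j ≠ 0) : σ i * σ j = 1 := by
  have entry (i j : n) : (σ i : 𝕜) * W i j * σ j = -W j i := by
    simpa [diagonal_mul, mul_diagonal] using congrFun (congrFun hW i) j
  have hsq : ((σ i : 𝕜) * σ j) ^ 2 = 1 := by
    refine mul_right_cancel₀ hij ?_
    linear_combination (σ i : 𝕜) * σ j * entry i j - entry j i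
  have hsq' : (σ i * σ j) ^ 2 = 1 := by exact_mod_cast hsq
  have := mul_pos (hσ i) (hσ j)
  nlinarith

end Matrix

namespace Fin

theorem apply_rev_le_inv_of_mem_doublyStochastic {m : ℕ} {σ : Fin m → ℝ}
    (hpos : ∀ j, 0 < σ j) (hσ : Antitone σ) {M : Matrix (Fin m) (Fin m) ℝ}
    (hM : M ∈ doublyStochastic ℝ (Fin m)) (hsupp : ∀ i j, M i j ≠ 0 → σ i * σ j = 1)
    (k : Fin m) : σ k.rev ≤ (σ k)⁻¹ := by
  by_contra! hlt
  set small : Finset (Fin m) := {j | σ j ≤ (σ k)⁻¹}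
  have hcard : #(Iic k) ≤ #small := by
    refine card_le_card_of_mem_doublyStochastic hM fun i hi j hij => ?_
    simp only [small, mem_filter, mem_univ, true_and]
    rw [eq_inv_of_mul_eq_one_right (hsupp i j hij)]
    exact inv_anti₀ (hpos k) (hσ (mem_Iic.mp hi))
  have hsub : small ⊆ Ioi k.rev := by
    intro j hj
    simp only [small, mem_filter, mem_univ, true_and, mem_Ioi] at hj ⊢
    by_contra! hle
    exact (hlt.trans_le (hσ hle)).not_ge hj
  have := card_le_card hsub
  rw [Fin.card_Iic] at hcard
  rw [Fin.card_Ioi, Fin.val_rev] at this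
  omega

theorem apply_rev_eq_inv_of_mem_doublyStochastic {m : ℕ} {σ : Fin m → ℝ}
    (hpos : ∀ j, 0 < σ j) (hσ : Antitone σ) {M : Matrix (Fin m) (Fin m) ℝ}
    (hM : M ∈ doublyStochastic ℝ (Fin m)) (hsupp : ∀ i j, M i j ≠ 0 → σ i * σ j = 1)
    (k : Fin m) : σ k.rev = (σ k)⁻¹ := by
  refine le_antisymm (apply_rev_le_inv_of_mem_doublyStochastic hpos hσ hM hsupp k) ?_
  have h := apply_rev_le_inv_of_mem_doublyStochastic (σ := fun j => (σ j.rev)⁻¹)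
    (fun j => inv_pos.mpr (hpos _))
    (fun i j hij => inv_anti₀ (hpos _) (hσ (rev_le_rev.mpr hij)))
    (reindex_mem_doublyStochastic (e₁ := revPerm) (e₂ := revPerm) hM)
    (fun i j hij => by
      rw [← mul_inv, hsupp _ _ (by simpa using hij), inv_one]) k
  simpa using h

end Fin

/-- If `A ∈ ℂ^{2n×2n}` is skew-coninvolutory and `(u, v, σ)` is a singular triplet of
`A`, then `(-conj v, conj u, 1/σ)` is also a singular triplet of `A`; consequently the
singular values of `A` appear in pairs `(σ, 1/σ)`. -/
theorem skewConinvolutory_singular_triplet_pair {n : ℕ}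
    (A : Matrix (Fin (2 * n)) (Fin (2 * n)) ℂ)
    (hA : A * A.map (starRingEnd ℂ) = -1) :
    (∀ (u v : Fin (2 * n) → ℂ) (σ : ℝ), 0 < σ →
      dotProduct (star u) u = 1 → dotProduct (star v) v = 1 →
      A.mulVec v = (σ : ℂ) • u → A.conjTranspose.mulVec u = (σ : ℂ) • v →
      A.mulVec (fun i => starRingEnd ℂ (u i)) =
          ((σ⁻¹ : ℝ) : ℂ) • (-(fun i => starRingEnd ℂ (v i))) ∧
        A.conjTranspose.mulVec (-(fun i => starRingEnd ℂ (v i))) =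
          ((σ⁻¹ : ℝ) : ℂ) • (fun i => starRingEnd ℂ (u i))) ∧
    (∀ (U V : Matrix (Fin (2 * n)) (Fin (2 * n)) ℂ) (σ : Fin (2 * n) → ℝ),
      U ∈ Matrix.unitaryGroup (Fin (2 * n)) ℂ → V ∈ Matrix.unitaryGroup (Fin (2 * n)) ℂ →
      (∀ j, 0 < σ j) → Antitone σ →
      A = U * Matrix.diagonal (fun j => (σ j : ℂ)) * V.conjTranspose →
      ∀ j, σ j.rev = (σ j)⁻¹) := by
  refine ⟨fun u v σ hσ _ _ hAv hAu => ?_, fun U V σ hU hV hσ hσ_anti hSVD => ?_⟩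
  · have hσ0 : (σ : ℂ) ≠ 0 := by exact_mod_cast hσ.ne'
    have hu := mulVec_conj_of_mul_map_conj_eq_neg_one hA hσ0 hAv
    have hv := mulVec_conj_of_mul_map_conj_eq_neg_one
      (conjTranspose_mul_map_conj_eq_neg_one hA) hσ0 hAu
    rw [Complex.conj_ofReal, ← Complex.ofReal_inv] at hu hv
    exact ⟨hu, by rw [mulVec_neg, hv, smul_neg, neg_neg]⟩
  · have hW := diagonal_mul_mul_diagonal_eq_neg_transpose hA hU hV hSVD
    refine Fin.apply_rev_eq_inv_of_mem_doublyStochastic hσ hσ_anti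
      (map_norm_sq_mem_doublyStochastic (mul_mem (Unitary.star_mem hV) (map_conj_mem_unitaryGroup hU)))
      fun i j hij => mul_eq_one_of_diagonal_mul_mul_diagonal_eq_neg_transpose hσ hW ?_
    simpa [star_eq_conjTranspose] using hij
end
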